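/- arXiv:math/9904163 — 6 statements merged into one kernel-verified Lean document; each statement's English description precedes it below -/
import Mathlib

section
/- Let F be an S-1-family of good graphs. Suppose that P is a forcing notion such that some good graph G in F is densely representable by the incompatibility relation of P. Then the Forcing Axiom FA_{ℵ₁}(P) fails, i.e., there exists a family {D_ξ : ξ < ω₁} of dense subsets of P such that no directed subset G ⊆ P satisfies G ∩ D_ξ ≠ ∅ for all ξ < ω₁. -/
noncomputable section

/-- The first uncountable ordinal `ω₁`, as a (linearly ordered) type. -/
def Omega1 : Type := (Cardinal.aleph 1).ord.ToType

instance : LinearOrder Omega1 :=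
  inferInstanceAs (LinearOrder (Cardinal.aleph 1).ord.ToType)

/-- A good graph `(A, U, E)`: `U` is a countable basis of a topology on `X`,
`A ⊆ X × ω₁` (here `W` plays the role of `ω₁`), `E` is a set of 2-element
subsets of `A`, first coordinates of distinct elements of `A` differ, and
non-edges can be separated by disjoint basic open sets. -/
structure GoodGraph (X : Type*) (W : Type*) where
  A : Set (X × W)
  U : Set (Set X)
  E : Set (Set (X × W))
  countable_U : U.Countable
  top : TopologicalSpace X
  basis_U : @TopologicalSpace.IsTopologicalBasis X top U
  pair_E : ∀ e ∈ E, ∃ a ∈ A, ∃ b ∈ A, a ≠ b ∧ e = {a, b}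
  fst_ne : ∀ a ∈ A, ∀ b ∈ A, a ≠ b → a.1 ≠ b.1
  separation : ∀ a ∈ A, ∀ b ∈ A, a.1 ≠ b.1 → ({a, b} : Set (X × W)) ∉ E →
    ∃ U₀ ∈ U, ∃ U₁ ∈ U, Disjoint U₀ U₁ ∧ a.1 ∈ U₀ ∧ b.1 ∈ U₁ ∧
      ∀ a' ∈ A, ∀ b' ∈ A, a'.1 ∈ U₀ → b'.1 ∈ U₁ →
        ({a', b'} : Set (X × W)) ∉ E

/-- `S` is an `m`-selector for the family `G` of good graphs. -/
def IsSelector {X W ι : Type*} (G : ι → GoodGraph X W) (m : ℕ)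
    (S : Set (Fin m → X × W)) : Prop :=
  ∃ ζ : Fin m → ι,
    (∀ ν ∈ S, ∀ ℓ : Fin m, ν ℓ ∈ (G (ζ ℓ)).A) ∧
    (∀ ν ∈ S, ∀ ρ ∈ S, ν ≠ ρ →
      ∃ ℓ : Fin m, ({ν ℓ, ρ ℓ} : Set (X × W)) ∈ (G (ζ ℓ)).E)

/-- The family `G` is an `S`-`m`-family: it has no uncountable `m`-selector. -/
def IsSFamilyM {X W ι : Type*} (G : ι → GoodGraph X W) (m : ℕ) : Prop :=
  ¬ ∃ S : Set (Fin m → X × W), IsSelector G m S ∧ ¬ S.Countable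

/-- The family `G` is an `S`-family: an `S`-`m`-family for every `0 < m`. -/
def IsSFamily {X W ι : Type*} (G : ι → GoodGraph X W) : Prop :=
  ∀ m : ℕ, 0 < m → IsSFamilyM G m

/-- A subset `D` of a forcing notion is dense (stronger = larger). -/
def ForcingDense {P : Type*} [PartialOrder P] (D : Set P) : Prop :=
  ∀ p : P, ∃ q ∈ D, p ≤ q

/-- Two conditions are incompatible: no common upper bound. -/
def Incompatible {P : Type*} [PartialOrder P] (p q : P) : Prop :=
  ¬ ∃ r : P, p ≤ r ∧ q ≤ r

/-- The Forcing Axiom `FA_{ℵ₁}(P)`. -/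
def FAaleph1 (P : Type*) [PartialOrder P] : Prop :=
  ∀ D : Omega1 → Set P, (∀ ξ, ForcingDense (D ξ)) →
    ∃ G : Set P, DirectedOn (· ≤ ·) G ∧ ∀ ξ, (G ∩ D ξ).Nonempty

/-- `q` is a condition of the forcing notion `Q` of finite `E`-free sets,
determined by the data `ζ₀,…,ζ_{m-1}` and `⟨ν_α : α < ω₁⟩`. -/
def QCond {X ι : Type*} (G : ι → GoodGraph X Omega1) {m : ℕ} (ζ : Fin m → ι)
    (ν : Omega1 → Fin m → X × Omega1) (q : Finset Omega1) : Prop :=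
  ∀ α ∈ q, ∀ β ∈ q, α ≠ β →
    ∀ ℓ : Fin m, ({ν α ℓ, ν β ℓ} : Set (X × Omega1)) ∉ (G (ζ ℓ)).E

/-- Two conditions of `Q` are compatible: they have a common upper bound in `Q`
(with respect to inclusion). -/
def QCompat {X ι : Type*} (G : ι → GoodGraph X Omega1) {m : ℕ} (ζ : Fin m → ι)
    (ν : Omega1 → Fin m → X × Omega1) (q₁ q₂ : Finset Omega1) : Prop :=
  ∃ r : Finset Omega1, QCond G ζ ν r ∧ q₁ ⊆ r ∧ q₂ ⊆ r

/-- If `F` is an `S`-`1`-family of good graphs and some good graph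
in `F` is densely representable by the incompatibility relation of the forcing
notion `P`, then `FA_{ℵ₁}(P)` fails: there is a family of ω₁ many dense subsets
of `P` such that no directed subset of `P` meets all of them. -/
theorem stmt0 {X ι P : Type*} [PartialOrder P]
    (G : ι → GoodGraph X Omega1) (hF : IsSFamilyM G 1)
    (ζ : ι) (π : X × Omega1 → P)
    (hπinj : Set.InjOn π (G ζ).A)
    (hπdense : ∀ α : Omega1,
      ForcingDense {p : P | ∃ x : X, (x, α) ∈ (G ζ).A ∧ π (x, α) = p})
    (hπincomp : ∀ a ∈ (G ζ).A, ∀ b ∈ (G ζ).A, a ≠ b →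
      ({a, b} : Set (X × Omega1)) ∉ (G ζ).E → Incompatible (π a) (π b)) :
    ∃ D : Omega1 → Set P, (∀ ξ, ForcingDense (D ξ)) ∧
      ¬ ∃ Gen : Set P, DirectedOn (· ≤ ·) Gen ∧ ∀ ξ, (Gen ∩ D ξ).Nonempty := by
  classical
  refine ⟨fun α => {p : P | ∃ x : X, (x, α) ∈ (G ζ).A ∧ π (x, α) = p},
    hπdense, ?_⟩
  rintro ⟨Gen, hdir, hmeet⟩
  have hx : ∀ α : Omega1, ∃ x : X, (x, α) ∈ (G ζ).A ∧ π (x, α) ∈ Gen := by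
    intro α
    obtain ⟨p, hpG, x, hxA, hpx⟩ := hmeet α
    exact ⟨x, hxA, hpx ▸ hpG⟩
  choose x hxA hxG using hx
  apply hF
  refine ⟨Set.range (fun α : Omega1 => fun _ : Fin 1 => ((x α, α) : X × Omega1)),
    ⟨fun _ => ζ, ?_, ?_⟩, ?_⟩
  · rintro ν ⟨α, rfl⟩ ℓ; exact hxA α
  · rintro ν ⟨α, rfl⟩ ρ ⟨β, rfl⟩ hne
    have hαβ : α ≠ β := by rintro rfl; exact hne rfl
    refine ⟨0, ?_⟩
    by_contra hE
    have hne2 : ((x α, α) : X × Omega1) ≠ (x β, β) := by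
      simp [hαβ]
    have hinc := hπincomp _ (hxA α) _ (hxA β) hne2 hE
    obtain ⟨r, _, hr1, hr2⟩ := hdir _ (hxG α) _ (hxG β)
    exact hinc ⟨r, hr1, hr2⟩
  · intro hS
    have hinj : Function.Injective
        (fun α : Omega1 => fun _ : Fin 1 => ((x α, α) : X × Omega1)) := by
      intro α β h
      have h0 := congrFun h 0
      exact (Prod.mk.injEq _ _ _ _ ▸ h0).2
    have hcnt : Countable Omega1 := by
      have := hS.to_subtype
      exact Function.Injective.countable
        (f := fun α : Omega1 => (⟨_, Set.mem_range_self α⟩ :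
          Set.range (fun α : Omega1 => fun _ : Fin 1 => ((x α, α) : X × Omega1))))
        (fun a b hab => hinj (congrArg Subtype.val hab))
    have hcard : (Cardinal.mk Omega1) = Cardinal.aleph 1 := by
      show Cardinal.mk (Cardinal.aleph 1).ord.ToType = _
      exact Cardinal.mk_ord_toType _
    have hle : Cardinal.mk Omega1 ≤ Cardinal.aleph0 :=
      Cardinal.mk_le_aleph0_iff.2 hcnt
    rw [hcard] at hle
    exact absurd hle (not_le.2 Cardinal.aleph0_lt_aleph_one)
end
end

section
/- Let F = {G_ζ = (A_ζ, U_ζ, E_ζ) : ζ < ξ} be a family of good graphs, and let Q be the forcing notion of finite E-free sets as defined from data m, ζ₀,…,ζ_{m−1}, and ⟨ν_α : α < ω₁⟩. Assume {q_ε : ε < ω₁} ⊆ Q, where for a fixed k < ω each q_ε has exactly k elements and q_ε = {α_i^ε : i < k} is its increasing enumeration. Then there is an uncountable set Y ⊆ ω₁ such that for all ε, δ ∈ Y: if q_ε and q_δ are incompatible in Q (i.e., have no common upper bound in Q), then there are i < k and ℓ < m such that {ν_{α_i^δ}(ℓ), ν_{α_i^ε}(ℓ)} ∈ E_{ζ_ℓ}.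 -/
noncomputable section

/-- Given conditions `q_ε` of `Q` (ε < ω₁), each of size `k` with
increasing enumeration `q_ε = {e ε i : i < k}`, there is an uncountable
`Y ⊆ ω₁` such that incompatible pairs from `Y` are witnessed coordinatewise:
if `q_ε ⊥ q_δ` then `{ν_{α_i^δ}(ℓ), ν_{α_i^ε}(ℓ)} ∈ E_{ζ_ℓ}` for some `i, ℓ`. -/
theorem stmt1 {X ι : Type*} (G : ι → GoodGraph X Omega1)
    {m : ℕ} (hm : 0 < m) (ζ : Fin m → ι)
    (ν : Omega1 → Fin m → X × Omega1)
    (hν : ∀ (α : Omega1) (ℓ : Fin m), ν α ℓ ∈ (G (ζ ℓ)).A)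
    {k : ℕ} (q : Omega1 → Finset Omega1)
    (hq : ∀ ε, QCond G ζ ν (q ε))
    (e : Omega1 → Fin k → Omega1)
    (he : ∀ ε, StrictMono (e ε))
    (heq : ∀ ε, (q ε : Set Omega1) = Set.range (e ε)) :
    ∃ Y : Set Omega1, ¬ Y.Countable ∧
      ∀ ε ∈ Y, ∀ δ ∈ Y, ¬ QCompat G ζ ν (q ε) (q δ) →
        ∃ (i : Fin k) (ℓ : Fin m),
          ({ν (e δ i) ℓ, ν (e ε i) ℓ} : Set (X × Omega1)) ∈ (G (ζ ℓ)).E := by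
  classical
  -- membership of enumerated points in q ε
  have hmem : ∀ ε (i : Fin k), e ε i ∈ q ε := by
    intro ε i
    have : e ε i ∈ (q ε : Set Omega1) := by rw [heq ε]; exact Set.mem_range_self i
    exact this
  -- choice of separating sets / degeneracy marker
  have hex : ∀ (ε : Omega1) (p : Fin k × Fin k × Fin m),
      ∃ o : Option (Set X × Set X),
        (o = none ↔ p.1 = p.2.1 ∨ ν (e ε p.1) p.2.2 = ν (e ε p.2.1) p.2.2) ∧
        ∀ U₀ U₁, o = some (U₀, U₁) →
          U₀ ∈ (G (ζ p.2.2)).U ∧ U₁ ∈ (G (ζ p.2.2)).U ∧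
          (ν (e ε p.1) p.2.2).1 ∈ U₀ ∧ (ν (e ε p.2.1) p.2.2).1 ∈ U₁ ∧
          ∀ a ∈ (G (ζ p.2.2)).A, ∀ b ∈ (G (ζ p.2.2)).A, a.1 ∈ U₀ → b.1 ∈ U₁ →
            ({a, b} : Set (X × Omega1)) ∉ (G (ζ p.2.2)).E := by
    intro ε ⟨i, j, ℓ⟩
    by_cases hd : i = j ∨ ν (e ε i) ℓ = ν (e ε j) ℓ
    · exact ⟨none, by simpa using hd, by simp⟩
    · push_neg at hd
      obtain ⟨hij, hab⟩ := hd
      have hne : e ε i ≠ e ε j := (he ε).injective.ne hij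
      have hnE : ({ν (e ε i) ℓ, ν (e ε j) ℓ} : Set (X × Omega1)) ∉ (G (ζ ℓ)).E :=
        hq ε (e ε i) (hmem ε i) (e ε j) (hmem ε j) hne ℓ
      have hfst : (ν (e ε i) ℓ).1 ≠ (ν (e ε j) ℓ).1 :=
        (G (ζ ℓ)).fst_ne _ (hν _ ℓ) _ (hν _ ℓ) hab
      obtain ⟨U₀, hU₀, U₁, hU₁, -, ha, hb, hsep⟩ :=
        (G (ζ ℓ)).separation _ (hν _ ℓ) _ (hν _ ℓ) hfst hnE
      refine ⟨some (U₀, U₁), by simp [hij, hab], ?_⟩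
      intro V₀ V₁ hV
      obtain ⟨rfl, rfl⟩ : U₀ = V₀ ∧ U₁ = V₁ := by
        simpa [Prod.ext_iff] using hV
      exact ⟨hU₀, hU₁, ha, hb, hsep⟩
  choose c hc1 hc2 using hex
  -- each color lies in a countable set
  set O : Fin k × Fin k × Fin m → Set (Option (Set X × Set X)) := fun p =>
    insert none (Option.some '' ((G (ζ p.2.2)).U ×ˢ (G (ζ p.2.2)).U)) with hO
  have hOc : ∀ p, (O p).Countable := fun p =>
    (((G (ζ p.2.2)).countable_U.prod (G (ζ p.2.2)).countable_U).image _).insert _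
  set T : Set ((Fin k × Fin k × Fin m) → Option (Set X × Set X)) :=
    {f | ∀ p, f p ∈ O p} with hT
  have hTc : T.Countable := Set.countable_pi hOc
  have hcT : ∀ ε, c ε ∈ T := by
    intro ε p
    rcases h : c ε p with _ | ⟨U₀, U₁⟩
    · exact Set.mem_insert _ _
    · obtain ⟨h0, h1, -⟩ := hc2 ε p U₀ U₁ h
      exact Set.mem_insert_of_mem _ ⟨(U₀, U₁), ⟨h0, h1⟩, rfl⟩
  -- pigeonhole: some fiber is uncountable
  have huniv : ¬ (Set.univ : Set Omega1).Countable := by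
    rw [Set.countable_univ_iff]
    intro h
    have h1 : Cardinal.mk Omega1 = Cardinal.aleph 1 := Cardinal.mk_ord_toType _
    have h2 : Cardinal.mk Omega1 ≤ Cardinal.aleph0 := Cardinal.mk_le_aleph0
    rw [h1] at h2
    exact absurd h2 (by simpa using (Cardinal.aleph0_lt_aleph_one).not_ge)
  have hfib : ∃ v ∈ T, ¬ (c ⁻¹' {v}).Countable := by
    by_contra h
    push_neg at h
    have hsub : (Set.univ : Set Omega1) ⊆ ⋃ v ∈ T, c ⁻¹' {v} := by
      intro ε _
      exact Set.mem_biUnion (hcT ε) rfl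
    exact huniv ((hTc.biUnion h).mono hsub)
  obtain ⟨v, -, hvY⟩ := hfib
  refine ⟨c ⁻¹' {v}, hvY, ?_⟩
  -- the key claim
  have key : ∀ ε δ : Omega1, c ε = c δ → ∀ (i j : Fin k) (ℓ : Fin m),
      ({ν (e ε i) ℓ, ν (e δ j) ℓ} : Set (X × Omega1)) ∈ (G (ζ ℓ)).E →
      ∃ (i' : Fin k) (ℓ' : Fin m),
        ({ν (e δ i') ℓ', ν (e ε i') ℓ'} : Set (X × Omega1)) ∈ (G (ζ ℓ')).E := by
    intro ε δ hcc i j ℓ hE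
    by_cases hij : i = j
    · subst hij
      exact ⟨i, ℓ, by rwa [Set.pair_comm]⟩
    by_cases hd : ν (e δ i) ℓ = ν (e δ j) ℓ
    · refine ⟨i, ℓ, ?_⟩
      rw [Set.pair_comm, ← hd] at hE
      exact hE
    · -- δ's pair (i,j) is separated; ε has the same color, contradiction
      have hnn : c δ (i, j, ℓ) ≠ none := by
        rw [Ne, hc1 δ (i, j, ℓ)]
        push_neg
        exact ⟨hij, hd⟩
      rcases h : c δ (i, j, ℓ) with _ | ⟨U₀, U₁⟩
      · exact absurd h hnn
      obtain ⟨-, -, -, hb, hsep⟩ := hc2 δ (i, j, ℓ) U₀ U₁ h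
      have hε : c ε (i, j, ℓ) = some (U₀, U₁) := by rw [hcc]; exact h
      obtain ⟨-, -, ha', -, -⟩ := hc2 ε (i, j, ℓ) U₀ U₁ hε
      exact absurd hE (hsep _ (hν _ ℓ) _ (hν _ ℓ) ha' hb)
  intro ε hε δ hδ hinc
  have hcc : c ε = c δ := by
    simp only [Set.mem_preimage, Set.mem_singleton_iff] at hε hδ
    rw [hε, hδ]
  have hnc : ¬ QCond G ζ ν (q ε ∪ q δ) := by
    intro h
    exact hinc ⟨q ε ∪ q δ, h, Finset.subset_union_left, Finset.subset_union_right⟩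
  unfold QCond at hnc
  push_neg at hnc
  obtain ⟨α, hα, β, hβ, hαβ, ℓ, hE⟩ := hnc
  rw [Finset.mem_union] at hα hβ
  rcases hα with hα | hα <;> rcases hβ with hβ | hβ
  · exact absurd hE (hq ε α hα β hβ hαβ ℓ)
  · -- α ∈ q ε, β ∈ q δ
    obtain ⟨i, rfl⟩ : ∃ i, e ε i = α := by
      have : α ∈ (q ε : Set Omega1) := hα
      rwa [heq ε] at this
    obtain ⟨j, rfl⟩ : ∃ j, e δ j = β := by
      have : β ∈ (q δ : Set Omega1) := hβ
      rwa [heq δ] at this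
    exact key ε δ hcc i j ℓ hE
  · -- α ∈ q δ, β ∈ q ε
    obtain ⟨i, rfl⟩ : ∃ i, e δ i = α := by
      have : α ∈ (q δ : Set Omega1) := hα
      rwa [heq δ] at this
    obtain ⟨j, rfl⟩ : ∃ j, e ε j = β := by
      have : β ∈ (q ε : Set Omega1) := hβ
      rwa [heq ε] at this
    obtain ⟨i', ℓ', h'⟩ := key δ ε hcc.symm i j ℓ hE
    exact ⟨i', ℓ', by rwa [Set.pair_comm]⟩
  · exact absurd hE (hq δ α hα β hβ hαβ ℓ)
end
end

section
/- Let F = {G_ζ = (A_ζ, U_ζ, E_ζ) : ζ < ξ} be an S-family of good graphs, and let Q be the forcing notion of finite E-free sets as defined from data m, ζ₀,…,ζ_{m−1}, and ⟨ν_α : α < ω₁⟩. Then Q satisfies the countable chain condition: every set of pairwise incompatible conditions in Q is countable. -/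
noncomputable section

section Aux

open Classical in
/-- If an uncountable set has countable image under `f`, some fiber is uncountable. -/
lemma uncountable_fiber {α β : Type*} {s : Set α} (hs : ¬ s.Countable) (f : α → β)
    (hr : (f '' s).Countable) : ∃ b, ¬ {x ∈ s | f x = b}.Countable := by
  by_contra h
  push_neg at h
  apply hs
  have hsub : s ⊆ ⋃ b ∈ f '' s, {x ∈ s | f x = b} := fun x hx =>
    Set.mem_biUnion (Set.mem_image_of_mem f hx) ⟨hx, rfl⟩
  exact (hr.biUnion fun b _ => h b).mono hsub

instance : Nonempty Omega1 := Cardinal.nonempty_ord_toType (Cardinal.aleph_pos 1).ne'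

/-- A fixed enumeration of a finset of cardinality `n`. -/
noncomputable def enum (n : ℕ) (q : Finset Omega1) (i : Fin n) : Omega1 :=
  if h : q.card = n then (q.orderIsoOfFin h i : Omega1) else Classical.arbitrary Omega1

lemma enum_mem {n : ℕ} {q : Finset Omega1} (h : q.card = n) (i : Fin n) :
    enum n q i ∈ q := by
  rw [enum, dif_pos h]; exact (q.orderIsoOfFin h i).2

lemma enum_inj {n : ℕ} {q : Finset Omega1} (h : q.card = n) {i j : Fin n} (hij : i ≠ j) :
    enum n q i ≠ enum n q j := by
  simp only [enum, dif_pos h]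
  intro he
  exact hij ((q.orderIsoOfFin h).injective (Subtype.ext he))

lemma enum_surj {n : ℕ} {q : Finset Omega1} (h : q.card = n) {α : Omega1} (hα : α ∈ q) :
    ∃ i, enum n q i = α := by
  refine ⟨(q.orderIsoOfFin h).symm ⟨α, hα⟩, ?_⟩
  rw [enum, dif_pos h, OrderIso.apply_symm_apply]

/-- The property of a pair of basic open sets separating two non-adjacent vertices. -/
def SepProp {X ι : Type*} (G : ι → GoodGraph X Omega1) {m : ℕ} (ζ : Fin m → ι)
    (a b : X × Omega1) (ℓ : Fin m) (w : Set X × Set X) : Prop :=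
  w.1 ∈ (G (ζ ℓ)).U ∧ w.2 ∈ (G (ζ ℓ)).U ∧ Disjoint w.1 w.2 ∧ a.1 ∈ w.1 ∧ b.1 ∈ w.2 ∧
    ∀ a' ∈ (G (ζ ℓ)).A, ∀ b' ∈ (G (ζ ℓ)).A, a'.1 ∈ w.1 → b'.1 ∈ w.2 →
      ({a', b'} : Set (X × Omega1)) ∉ (G (ζ ℓ)).E

open Classical in
/-- The "pattern" of a condition: a choice of separating pairs of basic sets. -/
noncomputable def pat {X ι : Type*} (G : ι → GoodGraph X Omega1) {m : ℕ} (ζ : Fin m → ι)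
    (ν : Omega1 → Fin m → X × Omega1) (n : ℕ) (q : Finset Omega1)
    (t : Fin n × Fin n × Fin m) : Option (Set X × Set X) :=
  if h : ∃ w, SepProp G ζ (ν (enum n q t.1) t.2.2) (ν (enum n q t.2.1) t.2.2) t.2.2 w
  then some h.choose else none

lemma pat_spec {X ι : Type*} {G : ι → GoodGraph X Omega1} {m : ℕ} {ζ : Fin m → ι}
    {ν : Omega1 → Fin m → X × Omega1} {n : ℕ} {q : Finset Omega1}
    {t : Fin n × Fin n × Fin m} {w : Set X × Set X}
    (h : pat G ζ ν n q t = some w) :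
    SepProp G ζ (ν (enum n q t.1) t.2.2) (ν (enum n q t.2.1) t.2.2) t.2.2 w := by
  rw [pat] at h
  split at h
  · next hex => cases h; exact hex.choose_spec
  · exact absurd h (by simp)

lemma pat_ne_none {X ι : Type*} {G : ι → GoodGraph X Omega1} {m : ℕ} {ζ : Fin m → ι}
    {ν : Omega1 → Fin m → X × Omega1} {n : ℕ} {q : Finset Omega1}
    {t : Fin n × Fin n × Fin m}
    (h : ∃ w, SepProp G ζ (ν (enum n q t.1) t.2.2) (ν (enum n q t.2.1) t.2.2) t.2.2 w) :
    pat G ζ ν n q t ≠ none := by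
  rw [pat, dif_pos h]; simp

end Aux

/-- If `F` is an `S`-family of good graphs then the forcing notion
`Q` of finite `E`-free sets satisfies the ccc: every set of pairwise
incompatible conditions is countable. -/


theorem stmt2 {X ι : Type*} (G : ι → GoodGraph X Omega1) (hF : IsSFamily G)
    {m : ℕ} (hm : 0 < m) (ζ : Fin m → ι)
    (ν : Omega1 → Fin m → X × Omega1)
    (hν : ∀ (α : Omega1) (ℓ : Fin m), ν α ℓ ∈ (G (ζ ℓ)).A)
    (A : Set (Finset Omega1))
    (hA : ∀ q ∈ A, QCond G ζ ν q)
    (hanti : ∀ q ∈ A, ∀ r ∈ A, q ≠ r → ¬ QCompat G ζ ν q r) :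
    A.Countable := by
  classical
  by_contra hc
  -- Step 1: uncountably many conditions of a fixed cardinality `n`.
  obtain ⟨n, hn⟩ := uncountable_fiber hc Finset.card
    (Set.Countable.mono (Set.image_subset_range _ _) (Set.to_countable _))
  have npos : 0 < n := by
    rcases Nat.eq_zero_or_pos n with h0 | h
    · exfalso
      apply hn
      refine Set.Countable.mono ?_ (Set.countable_singleton (∅ : Finset Omega1))
      intro q hq
      have : q = ∅ := Finset.card_eq_zero.mp (h0 ▸ hq.2)
      simp [this]
    · exact h
  -- Step 2: uncountably many of them with the same separation pattern.
  have hpatimg : (Set.range (pat G ζ ν n)).Countable := by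
    have hsub : Set.range (pat G ζ ν n) ⊆
        {g : Fin n × Fin n × Fin m → Option (Set X × Set X) |
          ∀ t, g t ∈ insert none (some '' ((G (ζ t.2.2)).U ×ˢ (G (ζ t.2.2)).U))} := by
      rintro g ⟨q, rfl⟩ t
      rw [pat]
      split
      · next hex =>
        exact Set.mem_insert_iff.mpr (Or.inr
          ⟨hex.choose, Set.mem_prod.mpr ⟨hex.choose_spec.1, hex.choose_spec.2.1⟩, rfl⟩)
      · exact Set.mem_insert _ _
    exact Set.Countable.mono hsub (Set.countable_pi fun t =>
      (((G (ζ t.2.2)).countable_U.prod (G (ζ t.2.2)).countable_U).image some).insert none)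
  obtain ⟨t0, ht0⟩ := uncountable_fiber hn (pat G ζ ν n)
    (Set.Countable.mono (Set.image_subset_range _ _) hpatimg)
  set B : Set (Finset Omega1) :=
    {x ∈ {x ∈ A | Finset.card x = n} | pat G ζ ν n x = t0} with hBdef
  -- Key lemma: a crossing edge between `q` and `r` yields an edge at the same position.
  have key1 : ∀ q ∈ B, ∀ r ∈ B, ∀ α ∈ q, ∀ β ∈ r, α ≠ β → ∀ ℓ : Fin m,
      ({ν α ℓ, ν β ℓ} : Set (X × Omega1)) ∈ (G (ζ ℓ)).E →
      ∃ i ℓ', ({ν (enum n q i) ℓ', ν (enum n r i) ℓ'} : Set (X × Omega1)) ∈ (G (ζ ℓ')).E := by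
    intro q hq r hr α hα β hβ hαβ ℓ hedge
    obtain ⟨⟨hqA, hqcard⟩, hqpat⟩ := hq
    obtain ⟨⟨hrA, hrcard⟩, hrpat⟩ := hr
    obtain ⟨i, hi⟩ := enum_surj hqcard hα
    obtain ⟨j, hj⟩ := enum_surj hrcard hβ
    by_cases hij : i = j
    · subst hij
      exact ⟨i, ℓ, by rwa [hi, hj]⟩
    · cases hpq : pat G ζ ν n q (i, j, ℓ) with
      | some w =>
        have hsq := pat_spec hpq
        have hpr : pat G ζ ν n r (i, j, ℓ) = some w := by
          rw [hrpat, ← hqpat]; exact hpq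
        have hsr := pat_spec hpr
        exfalso
        refine hsq.2.2.2.2.2 (ν α ℓ) (hν α ℓ) (ν β ℓ) (hν β ℓ) ?_ ?_ hedge
        · rw [← hi]; exact hsq.2.2.2.1
        · rw [← hj]; exact hsr.2.2.2.2.1
      | none =>
        have hpr : pat G ζ ν n r (i, j, ℓ) = none := by
          rw [hrpat, ← hqpat]; exact hpq
        have hr2 : ν (enum n r i) ℓ = ν (enum n r j) ℓ := by
          by_contra hne'
          refine pat_ne_none ?_ hpr
          have hfst := (G (ζ ℓ)).fst_ne _ (hν (enum n r i) ℓ) _ (hν (enum n r j) ℓ) hne'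
          have hnon := hA r hrA _ (enum_mem hrcard i) _ (enum_mem hrcard j)
            (enum_inj hrcard hij) ℓ
          obtain ⟨U₀, hU₀, U₁, hU₁, hdis, hx0, hx1, hstr⟩ :=
            (G (ζ ℓ)).separation _ (hν (enum n r i) ℓ) _ (hν (enum n r j) ℓ) hfst hnon
          exact ⟨(U₀, U₁), hU₀, hU₁, hdis, hx0, hx1, hstr⟩
        refine ⟨i, ℓ, ?_⟩
        rw [hi, hr2, hj]
        exact hedge
  -- Key lemma: distinct members of `B` have an edge at the same position.
  have key2 : ∀ q ∈ B, ∀ r ∈ B, q ≠ r → ∃ i ℓ,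
      ({ν (enum n q i) ℓ, ν (enum n r i) ℓ} : Set (X × Omega1)) ∈ (G (ζ ℓ)).E := by
    intro q hq r hr hne
    have hqA : q ∈ A := hq.1.1
    have hrA : r ∈ A := hr.1.1
    have hnc : ¬ QCond G ζ ν (q ∪ r) := fun h =>
      hanti q hqA r hrA hne ⟨q ∪ r, h, Finset.subset_union_left, Finset.subset_union_right⟩
    rw [QCond] at hnc
    push_neg at hnc
    obtain ⟨α, hα, β, hβ, hαβ, ℓ, hedge⟩ := hnc
    rcases Finset.mem_union.mp hα with hαq | hαr <;>
      rcases Finset.mem_union.mp hβ with hβq | hβr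
    · exact absurd hedge (hA q hqA α hαq β hβq hαβ ℓ)
    · exact key1 q hq r hr α hαq β hβr hαβ ℓ hedge
    · obtain ⟨i, ℓ', h'⟩ := key1 r hr q hq α hαr β hβq hαβ ℓ hedge
      exact ⟨i, ℓ', by rwa [Set.pair_comm] at h'⟩
    · exact absurd hedge (hA r hrA α hαr β hβr hαβ ℓ)
  -- Build an uncountable `n*m`-selector, contradicting `hF`.
  have hmn : 0 < n * m := Nat.mul_pos npos hm
  set φ : Fin n × Fin m ≃ Fin (n * m) := finProdFinEquiv with hφ
  set tup : Finset Omega1 → Fin (n * m) → X × Omega1 :=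
    fun q k => ν (enum n q (φ.symm k).1) (φ.symm k).2 with htup
  refine hF (n * m) hmn ⟨tup '' B, ⟨fun k => ζ (φ.symm k).2, ?_, ?_⟩, ?_⟩
  · rintro ν₁ ⟨q, hq, rfl⟩ k
    exact hν _ _
  · rintro ν₁ ⟨q, hq, rfl⟩ ρ ⟨r, hr, rfl⟩ hne
    have hqr : q ≠ r := fun h => hne (h ▸ rfl)
    obtain ⟨i, ℓ, hedge⟩ := key2 q hq r hr hqr
    refine ⟨φ (i, ℓ), ?_⟩
    simpa [htup, Equiv.symm_apply_apply] using hedge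
  · intro hSc
    apply ht0
    refine Set.MapsTo.countable_of_injOn (Set.mapsTo_image tup B) ?_ hSc
    intro q hq r hr htupeq
    by_contra hqr
    obtain ⟨i, ℓ, hedge⟩ := key2 q hq r hr hqr
    have hpt : ν (enum n q i) ℓ = ν (enum n r i) ℓ := by
      have := congrFun htupeq (φ (i, ℓ))
      simpa [htup, Equiv.symm_apply_apply] using this
    rw [hpt] at hedge
    obtain ⟨a, _, b, _, hab, habe⟩ := (G (ζ ℓ)).pair_E _ hedge
    have ha : a ∈ ({ν (enum n r i) ℓ, ν (enum n r i) ℓ} : Set (X × Omega1)) :=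
      habe ▸ Set.mem_insert a _
    have hb : b ∈ ({ν (enum n r i) ℓ, ν (enum n r i) ℓ} : Set (X × Omega1)) := by
      rw [habe]; exact Set.mem_insert_iff.mpr (Or.inr rfl)
    simp only [Set.mem_insert_iff, Set.mem_singleton_iff, or_self] at ha hb
    exact hab (ha.trans hb.symm)
end
end

section
/- Let F = {G_ζ = (A_ζ, U_ζ, E_ζ) : ζ < ξ} be a family of good graphs, and let Q be the forcing notion of finite E-free sets as defined from data m, ζ₀,…,ζ_{m−1}, and ⟨ν_α : α < ω₁⟩. Suppose 0 < k < ω and {q_η : η < ω₁} is an uncountable set of pairwise incompatible conditions of Q, each of size exactly k. Then F has an uncountable (k·m)-selector. -/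
noncomputable section

/-- If `{q_η : η < ω₁}` is an uncountable family of pairwise
incompatible conditions of `Q`, each of size exactly `k > 0`, then the family
`F` of good graphs has an uncountable `(k·m)`-selector. -/
theorem stmt3 {X ι : Type*} (G : ι → GoodGraph X Omega1)
    {m : ℕ} (hm : 0 < m) (ζ : Fin m → ι)
    (ν : Omega1 → Fin m → X × Omega1)
    (hν : ∀ (α : Omega1) (ℓ : Fin m), ν α ℓ ∈ (G (ζ ℓ)).A)
    {k : ℕ} (hk : 0 < k)
    (q : Omega1 → Finset Omega1)
    (hq : ∀ η, QCond G ζ ν (q η))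
    (hcard : ∀ η, (q η).card = k)
    (hanti : ∀ η η' : Omega1, η ≠ η' → ¬ QCompat G ζ ν (q η) (q η')) :
    ∃ S : Set (Fin (k * m) → X × Omega1),
      IsSelector G (k * m) S ∧ ¬ S.Countable := by
  classical
  -- enumerate each condition
  have hE : ∀ η, ∃ e : Fin k → Omega1, (∀ i, e i ∈ q η) ∧ Function.Injective e ∧
      ∀ α ∈ q η, ∃ i, e i = α := by
    intro η
    refine ⟨fun i => ((q η).orderIsoOfFin (hcard η) i : Omega1),
      fun i => ((q η).orderIsoOfFin (hcard η) i).2, ?_, ?_⟩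
    · intro i j h
      exact ((q η).orderIsoOfFin (hcard η)).injective (Subtype.ext h)
    · intro α hα
      obtain ⟨i, hi⟩ := ((q η).orderIsoOfFin (hcard η)).surjective ⟨α, hα⟩
      exact ⟨i, congrArg Subtype.val hi⟩
  choose e he_mem he_inj he_surj using hE
  -- no edges within a single condition
  have hnoedge : ∀ η (i j : Fin k) (ℓ : Fin m), i ≠ j →
      ({ν (e η i) ℓ, ν (e η j) ℓ} : Set (X × Omega1)) ∉ (G (ζ ℓ)).E := by
    intro η i j ℓ hij
    exact hq η (e η i) (he_mem η i) (e η j) (he_mem η j)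
      (fun h => hij (he_inj η h)) ℓ
  -- choose separation data for each pair of indices
  have hsep : ∀ η (i j : Fin k) (ℓ : Fin m),
      ∃ o : Option ({s // s ∈ (G (ζ ℓ)).U} × {s // s ∈ (G (ζ ℓ)).U}),
        (o = none → i = j ∨ ν (e η i) ℓ = ν (e η j) ℓ) ∧
        (∀ p, o = some p → (ν (e η i) ℓ).1 ∈ p.1.1 ∧ (ν (e η j) ℓ).1 ∈ p.2.1 ∧
          ∀ a' ∈ (G (ζ ℓ)).A, ∀ b' ∈ (G (ζ ℓ)).A, a'.1 ∈ p.1.1 → b'.1 ∈ p.2.1 →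
            ({a', b'} : Set (X × Omega1)) ∉ (G (ζ ℓ)).E) := by
    intro η i j ℓ
    by_cases h : i = j ∨ ν (e η i) ℓ = ν (e η j) ℓ
    · exact ⟨none, fun _ => h, fun p hp => by simp at hp⟩
    · push_neg at h
      obtain ⟨hij, hne⟩ := h
      obtain ⟨U₀, hU₀, U₁, hU₁, -, h0, h1, hprop⟩ :=
        (G (ζ ℓ)).separation _ (hν (e η i) ℓ) _ (hν (e η j) ℓ)
          ((G (ζ ℓ)).fst_ne _ (hν (e η i) ℓ) _ (hν (e η j) ℓ) hne)
          (hnoedge η i j ℓ hij)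
      refine ⟨some (⟨U₀, hU₀⟩, ⟨U₁, hU₁⟩), fun hc => by simp at hc, ?_⟩
      rintro p hp
      cases (Option.some_inj).mp hp
      exact ⟨h0, h1, hprop⟩
  choose sep hsep_none hsep_some using hsep
  -- Omega1 is uncountable
  have huniv : ¬ (Set.univ : Set Omega1).Countable := by
    rw [Set.countable_univ_iff]
    intro h
    have h1 : Cardinal.mk Omega1 ≤ Cardinal.aleph0 := Cardinal.mk_le_aleph0_iff.mpr h
    have h2 : Cardinal.mk Omega1 = Cardinal.aleph 1 := by
      show Cardinal.mk ((Cardinal.aleph 1).ord.ToType) = _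
      rw [Cardinal.mk_toType, Cardinal.card_ord]
    rw [h2] at h1
    exact absurd h1 (not_le.mpr Cardinal.aleph0_lt_aleph_one)
  -- pigeonhole: an uncountable fiber of the separation data
  haveI : ∀ ℓ : Fin m, Countable {s // s ∈ (G (ζ ℓ)).U} :=
    fun ℓ => ((G (ζ ℓ)).countable_U).to_subtype
  obtain ⟨c₀, hT⟩ : ∃ c₀, ¬ (sep ⁻¹' {c₀}).Countable := by
    by_contra h
    push_neg at h
    apply huniv
    have hcover : (Set.univ : Set Omega1) = ⋃ c, sep ⁻¹' {c} := by
      ext η; simp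
    rw [hcover]
    exact Set.countable_iUnion h
  set T := sep ⁻¹' {c₀} with hTdef
  -- the key combinatorial lemma
  have key : ∀ η ∈ T, ∀ η' ∈ T, η ≠ η' → ∃ (i : Fin k) (ℓ : Fin m),
      ({ν (e η i) ℓ, ν (e η' i) ℓ} : Set (X × Omega1)) ∈ (G (ζ ℓ)).E := by
    have claim : ∀ η ∈ T, ∀ η' ∈ T, ∀ α ∈ q η, ∀ β ∈ q η', ∀ ℓ : Fin m,
        ({ν α ℓ, ν β ℓ} : Set (X × Omega1)) ∈ (G (ζ ℓ)).E →
        ∃ (i : Fin k) (ℓ' : Fin m),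
          ({ν (e η i) ℓ', ν (e η' i) ℓ'} : Set (X × Omega1)) ∈ (G (ζ ℓ')).E := by
      intro η hη η' hη' α hα β hβ ℓ hedge
      obtain ⟨i, rfl⟩ := he_surj η α hα
      obtain ⟨j, rfl⟩ := he_surj η' β hβ
      by_cases hij : i = j
      · subst hij; exact ⟨i, ℓ, hedge⟩
      · have hsame : sep η i j ℓ = sep η' i j ℓ := by
          have h1 : sep η = c₀ := hη
          have h2 : sep η' = c₀ := hη'
          rw [h1, h2]
        cases hcase : sep η' i j ℓ with
        | none =>
          rcases hsep_none η' i j ℓ hcase with h | h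
          · exact absurd h hij
          · exact ⟨i, ℓ, by rw [h]; exact hedge⟩
        | some p =>
          have hη_eq : sep η i j ℓ = some p := by rw [hsame, hcase]
          obtain ⟨hi0, -, -⟩ := hsep_some η i j ℓ p hη_eq
          obtain ⟨-, hj1, hprop⟩ := hsep_some η' i j ℓ p hcase
          exact absurd hedge
            (hprop _ (hν (e η i) ℓ) _ (hν (e η' j) ℓ) hi0 hj1)
    intro η hη η' hη' hne
    have hnc : ¬ QCond G ζ ν (q η ∪ q η') := by
      intro h
      exact hanti η η' hne
        ⟨q η ∪ q η', h, Finset.subset_union_left, Finset.subset_union_right⟩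
    unfold QCond at hnc
    push_neg at hnc
    obtain ⟨α, hα, β, hβ, hab, ℓ, hedge⟩ := hnc
    rw [Finset.mem_union] at hα hβ
    have flip : ({ν β ℓ, ν α ℓ} : Set (X × Omega1)) ∈ (G (ζ ℓ)).E := by
      rwa [Set.pair_comm]
    rcases hα with hα | hα <;> rcases hβ with hβ | hβ
    · exact absurd hedge (hq η α hα β hβ hab ℓ)
    · exact claim η hη η' hη' α hα β hβ ℓ hedge
    · exact claim η hη η' hη' β hβ α hα ℓ flip
    · exact absurd hedge (hq η' α hα β hβ hab ℓ)
  -- the selector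
  set F : Omega1 → Fin (k * m) → X × Omega1 :=
    fun η p => ν (e η (finProdFinEquiv.symm p).1) (finProdFinEquiv.symm p).2 with hF
  have hFinj : Set.InjOn F T := by
    intro η hη η' hη' hFe
    by_contra hne
    obtain ⟨i, ℓ, hedge⟩ := key η hη η' hη' hne
    obtain ⟨x, -, y, -, hxy, hpair⟩ := (G (ζ ℓ)).pair_E _ hedge
    have heq : ν (e η i) ℓ = ν (e η' i) ℓ := by
      have h := congrFun hFe (finProdFinEquiv (i, ℓ))
      rw [hF] at h
      simp only [Equiv.symm_apply_apply] at h
      exact h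
    rw [heq, Set.pair_eq_singleton] at hpair
    have hx : x ∈ ({ν (e η' i) ℓ} : Set (X × Omega1)) := by
      rw [hpair]; exact Set.mem_insert _ _
    have hy : y ∈ ({ν (e η' i) ℓ} : Set (X × Omega1)) := by
      rw [hpair]; exact Set.mem_insert_of_mem _ rfl
    rw [Set.mem_singleton_iff] at hx hy
    exact hxy (hx.trans hy.symm)
  refine ⟨F '' T, ⟨fun p => ζ (finProdFinEquiv.symm p).2, ?_, ?_⟩, ?_⟩
  · rintro - ⟨η, -, rfl⟩ p
    exact hν _ _
  · rintro - ⟨η, hη, rfl⟩ - ⟨η', hη', rfl⟩ hne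
    have hηη' : η ≠ η' := by rintro rfl; exact hne rfl
    obtain ⟨i, ℓ, hedge⟩ := key η hη η' hη' hηη'
    refine ⟨finProdFinEquiv (i, ℓ), ?_⟩
    show ({F η _, F η' _} : Set (X × Omega1)) ∈ _
    rw [hF]
    simp only [Equiv.symm_apply_apply]
    exact hedge
  · intro hS
    exact hT (Set.countable_of_injective_of_countable_image hFinj hS)
end
end

section
/- Let F = {G_ζ = (A_ζ, U_ζ, E_ζ) : ζ < ξ} be an S-family of good graphs, and let Q be the forcing notion of finite E-free sets as defined from data m, ζ₀,…,ζ_{m−1}, and ⟨ν_α : α < ω₁⟩. Then there do NOT exist 0 < m* < ω, indices ζ'₀,…,ζ'_{m*−1} < ξ, conditions q_ε ∈ Q (for ε < ω₁), and sequences η_ε of length m* with η_ε(ℓ) ∈ A_{ζ'_ℓ} for all ℓ < m* (for ε < ω₁), such that for all ε < δ < ω₁: if q_ε and q_δ are compatible in Q (i.e., have a common upper bound in Q), then there is some ℓ < m* with {η_ε(ℓ), η_δ(ℓ)} ∈ E_{ζ'_ℓ}. -/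
noncomputable section

lemma omega1_uncountable : ¬ (Set.univ : Set Omega1).Countable := by
  rw [Set.countable_univ_iff]
  intro h
  have h1 : Cardinal.mk Omega1 = Cardinal.aleph 1 := by
    rw [show Cardinal.mk Omega1 = Cardinal.mk (Cardinal.aleph 1).ord.ToType from rfl, Cardinal.mk_toType,
      Cardinal.card_ord]
  have h2 : Cardinal.mk Omega1 ≤ Cardinal.aleph0 := Cardinal.mk_le_aleph0
  rw [h1] at h2
  exact absurd h2 (by simp [Cardinal.aleph0_lt_aleph_one.not_ge])

instance inst_s4 : Nonempty Omega1 := by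
  by_contra h
  exact omega1_uncountable (Set.countable_univ_iff.2 (by
    haveI : IsEmpty Omega1 := not_nonempty_iff.mp h
    infer_instance))

lemma exists_uncountable_fiber {C : Type*} [Countable C] {T : Set Omega1}
    (hT : ¬ T.Countable) (f : Omega1 → C) :
    ∃ c, ¬ {ε | ε ∈ T ∧ f ε = c}.Countable := by
  by_contra h
  push_neg at h
  apply hT
  have : T ⊆ ⋃ c, {ε | ε ∈ T ∧ f ε = c} := fun ε hε => Set.mem_iUnion.2 ⟨f ε, hε, rfl⟩
  exact (Set.countable_iUnion h).mono this


/-- If `F` is an `S`-family of good graphs then there is no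
configuration of `0 < m* < ω`, indices `ζ'₀,…,ζ'_{m*-1}`, conditions
`q_ε ∈ Q` and sequences `η_ε` of length `m*` with entries in the respective
`A_{ζ'_ℓ}` such that whenever `ε < δ < ω₁` and `q_ε, q_δ` are compatible in
`Q`, then `{η_ε(ℓ), η_δ(ℓ)} ∈ E_{ζ'_ℓ}` for some `ℓ < m*`. -/
theorem stmt4 {X ι : Type*} (G : ι → GoodGraph X Omega1) (hF : IsSFamily G)
    {m : ℕ} (hm : 0 < m) (ζ : Fin m → ι)
    (ν : Omega1 → Fin m → X × Omega1)
    (hν : ∀ (α : Omega1) (ℓ : Fin m), ν α ℓ ∈ (G (ζ ℓ)).A) :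
    ¬ ∃ (mS : ℕ) (_ : 0 < mS) (ζ' : Fin mS → ι)
        (q : Omega1 → Finset Omega1) (η : Omega1 → Fin mS → X × Omega1),
        (∀ ε, QCond G ζ ν (q ε)) ∧
        (∀ (ε : Omega1) (ℓ : Fin mS), η ε ℓ ∈ (G (ζ' ℓ)).A) ∧
        (∀ ε δ : Omega1, ε < δ → QCompat G ζ ν (q ε) (q δ) →
          ∃ ℓ : Fin mS,
            ({η ε ℓ, η δ ℓ} : Set (X × Omega1)) ∈ (G (ζ' ℓ)).E) := by
  rintro ⟨mS, hmS, ζ', q, η, hq, hη, hE⟩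
  -- Step 1: constant cardinality
  obtain ⟨n, hT₁⟩ := exists_uncountable_fiber omega1_uncountable (fun ε => (q ε).card)
  set T₁ : Set Omega1 := {ε | ε ∈ Set.univ ∧ (q ε).card = n} with hT₁def
  have hcard : ∀ ε ∈ T₁, (q ε).card = n := fun ε hε => hε.2
  -- enumeration of conditions
  set e : Omega1 → Fin n → Omega1 := fun ε i =>
    if h : (q ε).card = n then ((q ε).orderIsoOfFin h i : Omega1)
    else Classical.arbitrary Omega1 with hedef
  have hemem : ∀ ε ∈ T₁, ∀ i, e ε i ∈ q ε := by
    intro ε hε i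
    simp only [hedef, dif_pos (hcard ε hε)]
    exact ((q ε).orderIsoOfFin (hcard ε hε) i).2
  have heinj : ∀ ε ∈ T₁, ∀ i j : Fin n, e ε i = e ε j → i = j := by
    intro ε hε i j hij
    simp only [hedef, dif_pos (hcard ε hε)] at hij
    exact ((q ε).orderIsoOfFin (hcard ε hε)).injective (Subtype.coe_injective hij)
  have hesurj : ∀ ε ∈ T₁, ∀ α ∈ q ε, ∃ i, e ε i = α := by
    intro ε hε α hα
    refine ⟨((q ε).orderIsoOfFin (hcard ε hε)).symm ⟨α, hα⟩, ?_⟩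
    simp only [hedef, dif_pos (hcard ε hε), OrderIso.apply_symm_apply]
  -- Step 2: separating sets
  haveI : ∀ ℓ : Fin m, Countable ((G (ζ ℓ)).U) := fun ℓ => ((G (ζ ℓ)).countable_U).to_subtype
  have sep : ∀ (ε : Omega1) (i j : Fin n) (ℓ : Fin m),
      ∃ o : Option (((G (ζ ℓ)).U : Set (Set X)) × ((G (ζ ℓ)).U : Set (Set X))),
        ε ∈ T₁ → e ε i ≠ e ε j → ν (e ε i) ℓ ≠ ν (e ε j) ℓ →
        ∃ u, o = some u ∧ (ν (e ε i) ℓ).1 ∈ (u.1 : Set X) ∧ (ν (e ε j) ℓ).1 ∈ (u.2 : Set X) ∧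
          ∀ a' ∈ (G (ζ ℓ)).A, ∀ b' ∈ (G (ζ ℓ)).A, a'.1 ∈ (u.1 : Set X) → b'.1 ∈ (u.2 : Set X) →
            ({a', b'} : Set (X × Omega1)) ∉ (G (ζ ℓ)).E := by
    intro ε i j ℓ
    by_cases h : ε ∈ T₁ ∧ e ε i ≠ e ε j ∧ ν (e ε i) ℓ ≠ ν (e ε j) ℓ
    · obtain ⟨h1, h2, h3⟩ := h
      have ha := hν (e ε i) ℓ
      have hb := hν (e ε j) ℓ
      have hne : (ν (e ε i) ℓ).1 ≠ (ν (e ε j) ℓ).1 := (G (ζ ℓ)).fst_ne _ ha _ hb h3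
      have hnotE : ({ν (e ε i) ℓ, ν (e ε j) ℓ} : Set (X × Omega1)) ∉ (G (ζ ℓ)).E :=
        hq ε _ (hemem ε h1 i) _ (hemem ε h1 j) h2 ℓ
      obtain ⟨U₀, hU₀, U₁, hU₁, -, hx₀, hx₁, hcross⟩ :=
        (G (ζ ℓ)).separation _ ha _ hb hne hnotE
      exact ⟨some (⟨U₀, hU₀⟩, ⟨U₁, hU₁⟩), fun _ _ _ => ⟨_, rfl, hx₀, hx₁, hcross⟩⟩
    · exact ⟨none, fun h1 h2 h3 => absurd ⟨h1, h2, h3⟩ h⟩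
  choose σ hσ using sep
  obtain ⟨s, hT₂⟩ := exists_uncountable_fiber hT₁ σ
  set T₂ : Set Omega1 := {ε | ε ∈ T₁ ∧ σ ε = s} with hT₂def
  -- key claim
  have key : ∀ ε ∈ T₂, ∀ δ ∈ T₂, ∀ (i j : Fin n) (ℓ : Fin m),
      ({ν (e ε i) ℓ, ν (e δ j) ℓ} : Set (X × Omega1)) ∈ (G (ζ ℓ)).E →
      ∃ k : Fin n, ({ν (e ε k) ℓ, ν (e δ k) ℓ} : Set (X × Omega1)) ∈ (G (ζ ℓ)).E := by
    intro ε hε δ hδ i j ℓ hedge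
    by_cases hij : i = j
    · subst hij; exact ⟨i, hedge⟩
    · by_cases h1 : ν (e δ i) ℓ = ν (e δ j) ℓ
      · exact ⟨i, by rw [h1]; exact hedge⟩
      · by_cases h2 : ν (e ε i) ℓ = ν (e ε j) ℓ
        · exact ⟨j, by rw [← h2]; exact hedge⟩
        · exfalso
          have hδn : e δ i ≠ e δ j := fun h => hij (heinj δ hδ.1 i j h)
          have hεn : e ε i ≠ e ε j := fun h => hij (heinj ε hε.1 i j h)
          obtain ⟨u, hu, hx1, hx2, hcr⟩ := hσ δ i j ℓ hδ.1 hδn h1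
          obtain ⟨u', hu', hx1', -, -⟩ := hσ ε i j ℓ hε.1 hεn h2
          have hsame : σ ε i j ℓ = σ δ i j ℓ := by rw [hε.2, hδ.2]
          rw [hsame, hu] at hu'
          obtain rfl : u = u' := Option.some_injective _ hu'
          exact hcr _ (hν _ _) _ (hν _ _) hx1' hx2 hedge
  -- main claim (ordered)
  have aux : ∀ ε δ : Omega1, ε ∈ T₂ → δ ∈ T₂ → ε < δ →
      (∃ (k : Fin n) (ℓ : Fin m),
        ({ν (e ε k) ℓ, ν (e δ k) ℓ} : Set (X × Omega1)) ∈ (G (ζ ℓ)).E) ∨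
      (∃ ℓ : Fin mS, ({η ε ℓ, η δ ℓ} : Set (X × Omega1)) ∈ (G (ζ' ℓ)).E) := by
    intro ε δ hε hδ hlt
    by_cases hc : QCompat G ζ ν (q ε) (q δ)
    · exact Or.inr (hE ε δ hlt hc)
    · left
      have hnc : ¬ QCond G ζ ν (q ε ∪ q δ) := fun h =>
        hc ⟨q ε ∪ q δ, h, Finset.subset_union_left, Finset.subset_union_right⟩
      unfold QCond at hnc
      push_neg at hnc
      obtain ⟨α, hα, β, hβ, hne, ℓ, hedge⟩ := hnc
      rw [Finset.mem_union] at hα hβ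
      rcases hα with hα | hα <;> rcases hβ with hβ | hβ
      · exact absurd hedge (hq ε _ hα _ hβ hne ℓ)
      · obtain ⟨i, rfl⟩ := hesurj ε hε.1 α hα
        obtain ⟨j, rfl⟩ := hesurj δ hδ.1 β hβ
        obtain ⟨k, hk⟩ := key ε hε δ hδ i j ℓ hedge
        exact ⟨k, ℓ, hk⟩
      · obtain ⟨i, rfl⟩ := hesurj δ hδ.1 α hα
        obtain ⟨j, rfl⟩ := hesurj ε hε.1 β hβ
        rw [Set.pair_comm] at hedge
        obtain ⟨k, hk⟩ := key ε hε δ hδ j i ℓ hedge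
        exact ⟨k, ℓ, hk⟩
      · exact absurd hedge (hq δ _ hα _ hβ hne ℓ)
  have main : ∀ ε δ : Omega1, ε ∈ T₂ → δ ∈ T₂ → ε ≠ δ →
      (∃ (k : Fin n) (ℓ : Fin m),
        ({ν (e ε k) ℓ, ν (e δ k) ℓ} : Set (X × Omega1)) ∈ (G (ζ ℓ)).E) ∨
      (∃ ℓ : Fin mS, ({η ε ℓ, η δ ℓ} : Set (X × Omega1)) ∈ (G (ζ' ℓ)).E) := by
    intro ε δ hε hδ hne
    rcases lt_or_gt_of_ne hne with h | h
    · exact aux ε δ hε hδ h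
    · rcases aux δ ε hδ hε h with ⟨k, ℓ, hk⟩ | ⟨ℓ, hk⟩
      · exact Or.inl ⟨k, ℓ, by rw [Set.pair_comm]; exact hk⟩
      · exact Or.inr ⟨ℓ, by rw [Set.pair_comm]; exact hk⟩
  -- build the selector
  set M := n * m + mS with hMdef
  have hM : 0 < M := Nat.lt_of_lt_of_le hmS (Nat.le_add_left _ _)
  have E0 : (Fin n × Fin m) ⊕ Fin mS ≃ Fin M :=
    (Equiv.sumCongr finProdFinEquiv (Equiv.refl (Fin mS))).trans finSumFinEquiv
  obtain ⟨ρ, hρ⟩ : ∃ ρ : Omega1 → Fin M → X × Omega1, ∀ ε c,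
      ρ ε c = Sum.elim (fun p : Fin n × Fin m => ν (e ε p.1) p.2) (η ε) (E0.symm c) :=
    ⟨_, fun _ _ => rfl⟩
  obtain ⟨Z, hZ⟩ : ∃ Z : Fin M → ι, ∀ c,
      Z c = Sum.elim (fun p : Fin n × Fin m => ζ p.2) ζ' (E0.symm c) :=
    ⟨_, fun _ => rfl⟩
  have hρ1 : ∀ ε (i : Fin n) (ℓ : Fin m), ρ ε (E0 (Sum.inl (i, ℓ))) = ν (e ε i) ℓ := by
    intro ε i ℓ; rw [hρ, Equiv.symm_apply_apply, Sum.elim_inl]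
  have hρ2 : ∀ ε (ℓ : Fin mS), ρ ε (E0 (Sum.inr ℓ)) = η ε ℓ := by
    intro ε ℓ; rw [hρ, Equiv.symm_apply_apply, Sum.elim_inr]
  have hZ1 : ∀ (i : Fin n) (ℓ : Fin m), Z (E0 (Sum.inl (i, ℓ))) = ζ ℓ := by
    intro i ℓ; rw [hZ, Equiv.symm_apply_apply, Sum.elim_inl]
  have hZ2 : ∀ (ℓ : Fin mS), Z (E0 (Sum.inr ℓ)) = ζ' ℓ := by
    intro ℓ; rw [hZ, Equiv.symm_apply_apply, Sum.elim_inr]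
  have hedgeS : ∀ ε ∈ T₂, ∀ δ ∈ T₂, ε ≠ δ →
      ∃ c : Fin M, ({ρ ε c, ρ δ c} : Set (X × Omega1)) ∈ (G (Z c)).E := by
    intro ε hε δ hδ hne
    rcases main ε δ hε hδ hne with ⟨k, ℓ, hk⟩ | ⟨ℓ, hk⟩
    · exact ⟨E0 (Sum.inl (k, ℓ)), by rw [hρ1, hρ1, hZ1]; exact hk⟩
    · exact ⟨E0 (Sum.inr ℓ), by rw [hρ2, hρ2, hZ2]; exact hk⟩
  have hinj : Set.InjOn ρ T₂ := by
    intro ε hε δ hδ hxy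
    by_contra hne
    obtain ⟨c, hc⟩ := hedgeS ε hε δ hδ hne
    rw [hxy] at hc
    obtain ⟨a, ha, b, hb, hab, hpair⟩ := (G (Z c)).pair_E _ hc
    rw [Set.pair_eq_singleton] at hpair
    have ha' : a ∈ ({ρ δ c} : Set (X × Omega1)) := hpair ▸ Set.mem_insert _ _
    have hb' : b ∈ ({ρ δ c} : Set (X × Omega1)) := hpair ▸ Set.mem_insert_iff.2 (Or.inr rfl)
    exact hab (ha'.trans hb'.symm)
  have hSunc : ¬ (ρ '' T₂).Countable := fun h =>
    hT₂ ((Set.mapsTo_image ρ T₂).countable_of_injOn hinj h)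
  refine hF M hM ⟨ρ '' T₂, ⟨Z, ?_, ?_⟩, hSunc⟩
  · rintro _ ⟨ε, hε, rfl⟩ c
    rw [hρ, hZ]
    rcases E0.symm c with ⟨i, ℓ⟩ | ℓ
    · exact hν _ _
    · exact hη _ _
  · rintro _ ⟨ε, hε, rfl⟩ _ ⟨δ, hδ, rfl⟩ hne
    exact hedgeS ε hε δ hδ (fun h => hne (by rw [h]))
end
end

section
/- Suppose that P is a forcing notion of cardinality 𝔠 (the cardinality of the continuum) such that: (1) above any condition in P there is an antichain in P of size 𝔠 (an antichain being a set of pairwise incompatible conditions); and (2) there is a JMSh-sequence p̄ = ⟨p_i : i < 𝔠⟩ of elements of P whose range {p_i : i < 𝔠} is dense in P. Then the Forcing Axiom FA_{ℵ₁}(P) fails. -/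
noncomputable section

section Stmt5Aux

open Cardinal

universe u

/-- At each step of the recursion, the set of fresh elements of a big set is nonempty. -/
lemma stmt5_nonempty {P : Type u} (B : Set P) (hB : Cardinal.continuum.{u} ≤ #B)
    (δ : Cardinal.continuum.{u}.ord.ToType) (prev : ∀ δ', δ' < δ → P) :
    (B \ {x | ∃ δ', ∃ _ : δ' < δ, prev δ' ‹_› = x}).Nonempty := by
  by_contra h
  rw [Set.not_nonempty_iff_eq_empty, Set.diff_eq_empty] at h
  have h2 : #B ≤ #{x | ∃ δ', ∃ _ : δ' < δ, prev δ' ‹_› = x} := Cardinal.mk_le_mk_of_subset h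
  have hsub : {x | ∃ δ', ∃ _ : δ' < δ, prev δ' ‹_› = x} ⊆
      Set.range (fun y : Set.Iio δ => prev y.1 y.2) := by
    rintro x ⟨δ', hδ', rfl⟩
    exact ⟨⟨δ', hδ'⟩, rfl⟩
  have h4 : #(Set.range (fun y : Set.Iio δ => prev y.1 y.2)) < Cardinal.continuum :=
    lt_of_le_of_lt Cardinal.mk_range_le (Cardinal.mk_Iio_ord_toType δ)
  have h3 : #{x | ∃ δ', ∃ _ : δ' < δ, prev δ' ‹_› = x} < Cardinal.continuum :=
    lt_of_le_of_lt (Cardinal.mk_le_mk_of_subset hsub) h4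
  exact absurd (hB.trans h2) (not_le.mpr h3)

/-- A transfinitely-recursive choice of fresh elements from big sets. -/
noncomputable def stmt5_seq {P : Type u} (B : Cardinal.continuum.{u}.ord.ToType → Set P)
    (hB : ∀ δ, Cardinal.continuum.{u} ≤ #(B δ)) : Cardinal.continuum.{u}.ord.ToType → P :=
  WellFoundedLT.fix (fun δ prev => (stmt5_nonempty (B δ) (hB δ) δ prev).choose)

lemma stmt5_seq_spec {P : Type u} (B : Cardinal.continuum.{u}.ord.ToType → Set P)
    (hB : ∀ δ, Cardinal.continuum.{u} ≤ #(B δ)) (δ : Cardinal.continuum.{u}.ord.ToType) :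
    stmt5_seq B hB δ ∈ B δ ∧ ∀ δ' < δ, stmt5_seq B hB δ ≠ stmt5_seq B hB δ' := by
  have h := WellFoundedLT.fix_eq (fun δ prev => (stmt5_nonempty (B δ) (hB δ) δ prev).choose) δ
  have h2 := (stmt5_nonempty (B δ) (hB δ) δ (fun δ' _ => stmt5_seq B hB δ')).choose_spec
  rw [show stmt5_seq B hB δ = (stmt5_nonempty (B δ) (hB δ) δ
      (fun δ' _ => stmt5_seq B hB δ')).choose from h]
  refine ⟨h2.1, ?_⟩
  intro δ' hδ' heq
  exact h2.2 ⟨δ', hδ', heq.symm⟩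

lemma stmt5_seq_inj {P : Type u} (B : Cardinal.continuum.{u}.ord.ToType → Set P)
    (hB : ∀ δ, Cardinal.continuum.{u} ≤ #(B δ)) : Function.Injective (stmt5_seq B hB) := by
  intro δ δ' h
  by_contra hne
  rcases lt_or_gt_of_ne hne with hlt | hlt
  · exact (stmt5_seq_spec B hB δ').2 δ hlt h.symm
  · exact (stmt5_seq_spec B hB δ).2 δ' hlt h

end Stmt5Aux

/-- If `P` is a forcing notion of size continuum such that above
any condition there is an antichain of size continuum, and there is a
JMSh-sequence `⟨p_i : i < 𝔠⟩` whose range is dense in `P`, then `FA_{ℵ₁}(P)`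
fails. -/
theorem stmt5 {P : Type*} [PartialOrder P]
    (hcard : Cardinal.mk P = Cardinal.continuum)
    (hanti : ∀ p₀ : P, ∃ A : Set P, (∀ a ∈ A, p₀ ≤ a) ∧
      (∀ a ∈ A, ∀ b ∈ A, a ≠ b → Incompatible a b) ∧
      Cardinal.mk A = Cardinal.continuum)
    (p : Cardinal.continuum.ord.ToType → P)
    (hJMSh : ∀ F : Omega1 → Finset Cardinal.continuum.ord.ToType,
      (∀ α β : Omega1, α ≠ β → Disjoint (F α) (F β)) →
      ∃ α β : Omega1, α < β ∧ ∀ i ∈ F α, ∀ j ∈ F β, Incompatible (p i) (p j))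
    (hdense : ForcingDense (Set.range p)) :
    ¬ FAaleph1 P := by
  intro hFA
  classical
  -- an enumeration of `P` in order type `𝔠`
  obtain ⟨E⟩ : Nonempty (Cardinal.continuum.ord.ToType ≃ P) :=
    Cardinal.eq.mp (by rw [Cardinal.mk_ord_toType, hcard])
  -- above every condition there are `𝔠` many elements of the range of `p`
  have hbig : ∀ q : P,
      Cardinal.continuum ≤ Cardinal.mk {x : P | x ∈ Set.range p ∧ q ≤ x} := by
    intro q
    obtain ⟨A, hA1, hA2, hA3⟩ := hanti q
    choose v hv1 hv2 using fun a : A => hdense a.1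
    have hinj : Function.Injective (fun a : A =>
        (⟨v a, hv1 a, le_trans (hA1 a a.2) (hv2 a)⟩ :
          {x : P | x ∈ Set.range p ∧ q ≤ x})) := by
      intro a b hab
      by_contra hne
      have hne' : (a : P) ≠ b := fun h => hne (Subtype.ext h)
      refine hA2 a a.2 b b.2 hne' ⟨v a, hv2 a, ?_⟩
      have hvv : v a = v b := congrArg Subtype.val hab
      rw [hvv]; exact hv2 b
    calc Cardinal.continuum = Cardinal.mk A := hA3.symm
      _ ≤ _ := Cardinal.mk_le_of_injective hinj
  -- a pairing bijection `𝔠 ≃ 𝔠 × ω₁`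
  obtain ⟨J⟩ : Nonempty (Cardinal.continuum.ord.ToType ≃
      Cardinal.continuum.ord.ToType × Omega1) := by
    apply Cardinal.eq.mp
    have hmkO : Cardinal.mk Omega1 = Cardinal.aleph 1 := Cardinal.mk_ord_toType _
    rw [Cardinal.mk_prod, Cardinal.mk_ord_toType, Cardinal.lift_continuum, hmkO,
      Cardinal.lift_aleph, Ordinal.lift_one]
    exact (Cardinal.mul_eq_left Cardinal.aleph0_le_continuum
      Cardinal.aleph_one_le_continuum
      (ne_of_gt ((Cardinal.aleph0_pos).trans_le (Cardinal.aleph0_le_aleph 1)))).symm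
  -- the matrix of fresh elements
  set B : Cardinal.continuum.ord.ToType → Set P :=
    fun δ => {x : P | x ∈ Set.range p ∧ E (J δ).1 ≤ x} with hBdef
  have hB : ∀ δ, Cardinal.continuum ≤ Cardinal.mk (B δ) := fun δ => hbig (E (J δ).1)
  set x := stmt5_seq B hB with hxdef
  -- the `ω₁` pairwise disjoint dense sets
  set D : Omega1 → Set P := fun ξ => Set.range (fun γ => x (J.symm (γ, ξ))) with hDdef
  have hD : ∀ ξ, ForcingDense (D ξ) := by
    intro ξ q
    refine ⟨x (J.symm (E.symm q, ξ)), ⟨E.symm q, rfl⟩, ?_⟩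
    have h1 := (stmt5_seq_spec B hB (J.symm (E.symm q, ξ))).1
    simp only [hBdef, Set.mem_setOf_eq, Equiv.apply_symm_apply] at h1
    exact h1.2
  obtain ⟨G, hGdir, hGmeet⟩ := hFA D hD
  choose g hg using hGmeet
  have hgp : ∀ ξ, g ξ ∈ Set.range p := by
    intro ξ
    obtain ⟨γ, hγ⟩ := (hg ξ).2
    rw [← hγ]
    exact ((stmt5_seq_spec B hB _).1).1
  choose i hi using hgp
  have hgne : ∀ ξ η : Omega1, ξ ≠ η → g ξ ≠ g η := by
    intro ξ η hne heq
    obtain ⟨γ, hγ⟩ := (hg ξ).2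
    obtain ⟨γ', hγ'⟩ := (hg η).2
    have h1 : J.symm (γ, ξ) = J.symm (γ', η) :=
      stmt5_seq_inj B hB (hγ.trans (heq.trans hγ'.symm))
    have h2 : (γ, ξ) = (γ', η) := J.symm.injective h1
    exact hne (congrArg Prod.snd h2)
  obtain ⟨α, β, hαβ, hinc⟩ := hJMSh (fun ξ => {i ξ}) (by
    intro α β hne
    simp only [Finset.disjoint_singleton_left, Finset.mem_singleton]
    intro h
    exact hgne α β hne (by rw [← hi α, ← hi β, h]))
  obtain ⟨r, hrG, hr1, hr2⟩ := hGdir (g α) (hg α).1 (g β) (hg β).1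
  exact hinc (i α) (Finset.mem_singleton_self _) (i β) (Finset.mem_singleton_self _)
    ⟨r, by rw [hi]; exact hr1, by rw [hi]; exact hr2⟩
end
end
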